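/- arXiv:2405.03112 — 2 statements merged into one kernel-verified Lean document; each statement's English description precedes it below -/
import Mathlib

section
/- Let R be a connected rainbow graph on vertex set [k] with edge set E, k ≥ 3, viewed as a T-edge-colored complete graph with T = E ∪ {∅}, and let H be an n-vertex T-edge-colored complete graph. Then for every i ∈ [k] and all distinct vertices x, y ∈ V(H), the number of injective maps φ : [k] → V(H) with φ(i) = x, χ_H(φ(a)φ(b)) = χ_R(ab) for all a ≠ b, and y ∈ image(φ), is at most (|N_i(x)|/(k−2))^{k−2}. -/
open Finset Filter

open scoped Classical

section Defs

variable {T : Type}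

/-- A coloring of the complete graph is symmetric. -/
def IsSym {V : Type} (χ : V → V → T) : Prop := ∀ u v, χ u v = χ v u

/-- `copyCount k n R χ` : the number of `k`-element subsets of `Fin n` whose coloring
induced by `χ` is isomorphic (as an edge-colored complete graph) to `R`. -/
noncomputable def copyCount (k n : ℕ) (R : Fin k → Fin k → T) (χ : Fin n → Fin n → T) : ℕ :=
  ((Finset.powersetCard k (Finset.univ : Finset (Fin n))).filter
    (fun S => ∃ φ : Fin k → Fin n, Function.Injective φ ∧ (∀ a, φ a ∈ S) ∧
      ∀ a b : Fin k, a ≠ b → χ (φ a) (φ b) = R a b)).card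

/-- `maxCopyCount k n R = I(R,n)` : the maximum of `copyCount` over all symmetric
`T`-colorings of the complete graph on `n` vertices. -/
noncomputable def maxCopyCount [Fintype T] (k n : ℕ) (R : Fin k → Fin k → T) : ℕ :=
  Finset.sup ((Finset.univ : Finset (Fin n → Fin n → T)).filter (fun χ => IsSym χ))
    (fun χ => copyCount k n R χ)

/-- `vertDeg k n R χ x = d(x)` : the number of `k`-subsets containing `x` whose induced
coloring is isomorphic to `R`. -/
noncomputable def vertDeg (k n : ℕ) (R : Fin k → Fin k → T) (χ : Fin n → Fin n → T)
    (x : Fin n) : ℕ :=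
  ((Finset.powersetCard k (Finset.univ : Finset (Fin n))).filter
    (fun S => x ∈ S ∧ ∃ φ : Fin k → Fin n, Function.Injective φ ∧ (∀ a, φ a ∈ S) ∧
      ∀ a b : Fin k, a ≠ b → χ (φ a) (φ b) = R a b)).card

/-- `embCount k n R χ i x = d_i(x)` : the number of injective color-preserving maps
`φ : Fin k → Fin n` with `φ i = x`. -/
noncomputable def embCount (k n : ℕ) (R : Fin k → Fin k → T) (χ : Fin n → Fin n → T)
    (i : Fin k) (x : Fin n) : ℕ :=
  ((Finset.univ : Finset (Fin k → Fin n)).filter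
    (fun φ => Function.Injective φ ∧ φ i = x ∧
      ∀ a b : Fin k, a ≠ b → χ (φ a) (φ b) = R a b)).card

/-- `Nset k n R χ i x = N_i(x)` : the set of vertices `y ≠ x` lying in the image of some
injective color-preserving map `φ : Fin k → Fin n` with `φ i = x`. -/
noncomputable def Nset (k n : ℕ) (R : Fin k → Fin k → T) (χ : Fin n → Fin n → T)
    (i : Fin k) (x : Fin n) : Finset (Fin n) :=
  (Finset.univ : Finset (Fin n)).filter
    (fun y => y ≠ x ∧ ∃ φ : Fin k → Fin n, Function.Injective φ ∧ φ i = x ∧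
      (∀ a b : Fin k, a ≠ b → χ (φ a) (φ b) = R a b) ∧ ∃ a, φ a = y)

/-- `colorDeg χ x c = d_c(x)` : the number of vertices `y ≠ x` with `χ x y = c`. -/
noncomputable def colorDeg {n : ℕ} (χ : Fin n → Fin n → T) (x : Fin n) (c : T) : ℕ :=
  ((Finset.univ : Finset (Fin n)).filter (fun y => y ≠ x ∧ χ x y = c)).card

end Defs

/-- The rainbow `k`-clique: the edge `ij` gets color `{i,j}`. -/
def rainbowClique (k : ℕ) : Fin k → Fin k → Finset (Fin k) := fun i j => {i, j}

/-- A rainbow graph `G` on `[k]`, viewed as an edge-colored complete graph: edges `ij ∈ E`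
get color `{i,j}`, non-edges get color `∅`. -/
noncomputable def rainbowOf {k : ℕ} (G : SimpleGraph (Fin k)) :
    Fin k → Fin k → Finset (Fin k) :=
  fun i j => if G.Adj i j then {i, j} else ∅

/-- `B(x)` : the set of neighbors of `x`, i.e. vertices joined to `x` by a non-`∅` color. -/
noncomputable def Bset {k n : ℕ} (χ : Fin n → Fin n → Finset (Fin k)) (x : Fin n) :
    Finset (Fin n) :=
  (Finset.univ : Finset (Fin n)).filter (fun y => y ≠ x ∧ χ x y ≠ ∅)

/-- The degree of vertex `i` in the graph `G`. -/
noncomputable def degR {k : ℕ} (G : SimpleGraph (Fin k)) (i : Fin k) : ℕ :=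
  ((Finset.univ : Finset (Fin k)).filter (fun j => G.Adj i j)).card

set_option maxHeartbeats 1000000

open Finset

open scoped Classical

lemma amgm_aux {a b : ℝ} (ha : 0 ≤ a) (hb : 0 ≤ b) (q : ℕ) :
    a * (b / q) ^ q ≤ ((a + b) / (q + 1)) ^ (q + 1) := by
  rcases Nat.eq_zero_or_pos q with hq | hq
  · subst hq; simpa using by linarith
  · have hq0 : (0:ℝ) < q := by exact_mod_cast hq
    have he : (0:ℝ) < (q:ℝ) + 1 := by linarith
    have hw : 1/((q:ℝ)+1) + (q:ℝ)/((q:ℝ)+1) = 1 := by field_simp; ring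
    have key := Real.geom_mean_le_arith_mean2_weighted
      (by positivity : (0:ℝ) ≤ 1/((q:ℝ)+1)) (by positivity : (0:ℝ) ≤ (q:ℝ)/((q:ℝ)+1))
      ha (by positivity : (0:ℝ) ≤ b / q) hw
    have hrhs : 1/((q:ℝ)+1) * a + (q:ℝ)/((q:ℝ)+1) * (b/q) = (a+b)/((q:ℝ)+1) := by
      field_simp
    rw [hrhs] at key
    have hL : (0:ℝ) ≤ a ^ (1/((q:ℝ)+1)) * (b/q) ^ ((q:ℝ)/((q:ℝ)+1)) := by positivity
    have hpow := pow_le_pow_left₀ hL key (q+1)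
    have hid : (a ^ (1/((q:ℝ)+1)) * (b/q) ^ ((q:ℝ)/((q:ℝ)+1))) ^ (q+1) = a * (b/q)^q := by
      rw [mul_pow, ← Real.rpow_natCast (a ^ (1/((q:ℝ)+1))) (q+1),
        ← Real.rpow_natCast ((b/q) ^ ((q:ℝ)/((q:ℝ)+1))) (q+1),
        ← Real.rpow_mul ha, ← Real.rpow_mul (by positivity)]
      push_cast
      have e1 : 1/((q:ℝ)+1) * ((q:ℝ)+1) = 1 := by field_simp
      have e2 : (q:ℝ)/((q:ℝ)+1) * ((q:ℝ)+1) = (q:ℝ) := by field_simp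
      rw [e1, e2, Real.rpow_one, Real.rpow_natCast]
    rw [hid] at hpow
    convert hpow using 3

lemma div_mono_nonneg {a b c : ℝ} (h : a ≤ b) (hc : 0 ≤ c) : a / c ≤ b / c := by
  rw [div_eq_mul_inv, div_eq_mul_inv]
  exact mul_le_mul_of_nonneg_right h (inv_nonneg.2 hc)

namespace PBPaux

variable {k n : ℕ} (G : SimpleGraph (Fin k)) (χ : Fin n → Fin n → Finset (Fin k))

noncomputable def Ext (A : Finset (Fin k)) (ψ : Fin k → Fin n) : Finset (Fin k → Fin n) :=
  (Finset.univ : Finset (Fin k → Fin n)).filter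
    (fun φ => Function.Injective φ ∧ (∀ a b : Fin k, a ≠ b → χ (φ a) (φ b) = rainbowOf G a b) ∧
      ∀ a ∈ A, φ a = ψ a)

noncomputable def Mst (A : Finset (Fin k)) (ψ : Fin k → Fin n) : Finset (Fin n) :=
  (Finset.univ : Finset (Fin n)).filter
    (fun z => ∃ φ ∈ Ext G χ A ψ, ∃ b, b ∉ A ∧ φ b = z)

noncomputable def Tst (y : Fin n) (A : Finset (Fin k)) (ψ : Fin k → Fin n) :
    Finset (Fin k → Fin n) :=
  (Ext G χ A ψ).filter (fun φ => ∃ c, c ∉ A ∧ φ c = y)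

variable {G χ}

lemma mem_Ext {A ψ φ} : φ ∈ Ext G χ A ψ ↔
    Function.Injective φ ∧ (∀ a b : Fin k, a ≠ b → χ (φ a) (φ b) = rainbowOf G a b) ∧
      ∀ a ∈ A, φ a = ψ a := by simp [Ext]

lemma mem_Mst {A ψ z} : z ∈ Mst G χ A ψ ↔ ∃ φ ∈ Ext G χ A ψ, ∃ b, b ∉ A ∧ φ b = z := by
  simp [Mst]

lemma ext_filter_eq {A : Finset (Fin k)} {ψ : Fin k → Fin n} {b : Fin k} (hb : b ∉ A)
    (w : Fin n) :
    (Ext G χ A ψ).filter (fun φ => φ b = w) =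
      Ext G χ (insert b A) (Function.update ψ b w) := by
  ext φ
  simp only [mem_filter, mem_Ext, mem_insert]
  constructor
  · rintro ⟨⟨h1, h2, h3⟩, h4⟩
    refine ⟨h1, h2, ?_⟩
    intro a ha
    rcases ha with rfl | ha
    · rw [Function.update_self]; exact h4
    · rw [Function.update_of_ne (fun h : a = b => hb (h ▸ ha))]; exact h3 a ha
  · rintro ⟨h1, h2, h3⟩
    refine ⟨⟨h1, h2, fun a ha => ?_⟩, ?_⟩
    · have := h3 a (Or.inr ha)
      rwa [Function.update_of_ne (fun h : a = b => hb (h ▸ ha))] at this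
    · have := h3 b (Or.inl rfl)
      rwa [Function.update_self] at this

lemma card_fiber {A : Finset (Fin k)} {ψ : Fin k → Fin n} {b : Fin k} (hb : b ∉ A) :
    (Ext G χ A ψ).card =
      ∑ w ∈ (Ext G χ A ψ).image (fun φ => φ b),
        (Ext G χ (insert b A) (Function.update ψ b w)).card := by
  rw [Finset.card_eq_sum_card_fiberwise
    (fun φ hφ => Finset.mem_image_of_mem (fun φ => φ b) hφ)]
  exact Finset.sum_congr rfl (fun w _ => by rw [ext_filter_eq hb w])

lemma image_subset_Mst {A : Finset (Fin k)} {ψ : Fin k → Fin n} {b : Fin k} (hb : b ∉ A) :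
    (Ext G χ A ψ).image (fun φ => φ b) ⊆ Mst G χ A ψ := by
  intro z hz
  rcases Finset.mem_image.1 hz with ⟨φ, hφ, rfl⟩
  exact mem_Mst.2 ⟨φ, hφ, b, hb, rfl⟩

lemma Ext_insert_subset {A : Finset (Fin k)} {ψ : Fin k → Fin n} {b : Fin k} (hb : b ∉ A)
    (w : Fin n) : Ext G χ (insert b A) (Function.update ψ b w) ⊆ Ext G χ A ψ := by
  intro φ hφ
  rcases mem_Ext.1 hφ with ⟨h1, h2, h3⟩
  refine mem_Ext.2 ⟨h1, h2, fun a ha => ?_⟩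
  have := h3 a (mem_insert_of_mem ha)
  rwa [Function.update_of_ne (fun h : a = b => hb (h ▸ ha))] at this

lemma Mst_insert_subset {A : Finset (Fin k)} {ψ : Fin k → Fin n} {a b : Fin k}
    (ha : a ∈ A) (hb : b ∉ A) (hadj : G.Adj a b) (w : Fin n) :
    Mst G χ (insert b A) (Function.update ψ b w) ⊆
      Mst G χ A ψ \ ((Ext G χ A ψ).image (fun φ => φ b)) := by
  intro z hz
  rcases mem_Mst.1 hz with ⟨φ, hφ, c, hc, rfl⟩
  have hcb : c ≠ b := fun h => hc (h ▸ mem_insert_self b A)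
  have hcA : c ∉ A := fun h => hc (mem_insert_of_mem h)
  have hφA : φ ∈ Ext G χ A ψ := Ext_insert_subset hb w hφ
  rw [Finset.mem_sdiff]
  refine ⟨mem_Mst.2 ⟨φ, hφA, c, hcA, rfl⟩, ?_⟩
  intro hmem
  rcases Finset.mem_image.1 hmem with ⟨φ', hφ', hbz⟩
  rcases mem_Ext.1 hφ with ⟨h1, h2, h3⟩
  rcases mem_Ext.1 hφ' with ⟨h1', h2', h3'⟩
  have hab : a ≠ b := fun h => hb (h ▸ ha)
  have hac : a ≠ c := fun h => hcA (h ▸ ha)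
  have hψa : φ a = ψ a := by
    have := h3 a (mem_insert_of_mem ha)
    rwa [Function.update_of_ne hab] at this
  have e1 : χ (ψ a) (φ c) = rainbowOf G a b := by
    rw [← h3' a ha, ← hbz]; exact h2' a b hab
  have e2 : χ (ψ a) (φ c) = rainbowOf G a c := by
    rw [← hψa]; exact h2 a c hac
  rw [e2] at e1
  have hbmem : b ∈ rainbowOf G a b := by
    simp [rainbowOf, hadj]
  rw [← e1] at hbmem
  by_cases hadc : G.Adj a c
  · simp only [rainbowOf, if_pos hadc, mem_insert, mem_singleton] at hbmem
    rcases hbmem with h | h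
    · exact hab h.symm
    · exact hcb h.symm
  · simp [rainbowOf, hadc] at hbmem

lemma compl_zero_eq_univ {A : Finset (Fin k)} (h : Aᶜ.card = 0) : A = univ := by
  have : Aᶜ = ∅ := Finset.card_eq_zero.1 h
  simpa using congrArg compl this

lemma Ext_card_le_one {ψ : Fin k → Fin n} : (Ext G χ univ ψ).card ≤ 1 := by
  refine Finset.card_le_one.2 ?_
  intro φ hφ φ' hφ'
  rcases mem_Ext.1 hφ with ⟨_, _, h3⟩
  rcases mem_Ext.1 hφ' with ⟨_, _, h3'⟩
  funext a
  rw [h3 a (mem_univ a), h3' a (mem_univ a)]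

lemma Tst_univ_eq_empty {y : Fin n} {ψ : Fin k → Fin n} : Tst G χ y univ ψ = ∅ := by
  refine Finset.filter_false_of_mem ?_
  intro φ _
  rintro ⟨c, hc, _⟩
  exact hc (mem_univ c)

lemma cross_edge (hG : G.Preconnected) {A : Finset (Fin k)} (hne : A.Nonempty)
    (hA : A ≠ univ) : ∃ a ∈ A, ∃ b, b ∉ A ∧ G.Adj a b := by
  obtain ⟨u, hu⟩ := hne
  have : ∃ v, v ∉ A := by
    by_contra h
    push_neg at h
    exact hA (Finset.eq_univ_of_forall h)
  obtain ⟨v, hv⟩ := this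
  obtain ⟨p⟩ := hG u v
  clear hA
  induction p with
  | nil => exact absurd hu hv
  | @cons u u' v h p ih =>
    by_cases hm : u' ∈ A
    · exact ih hm hv
    · exact ⟨u, hu, u', hm, h⟩

lemma compl_insert_card {A : Finset (Fin k)} {b : Fin k} (hb : b ∉ A) {r : ℕ}
    (hr : Aᶜ.card = r + 1) : ((insert b A)ᶜ).card = r := by
  rw [Finset.compl_insert, Finset.card_erase_of_mem (Finset.mem_compl.2 hb), hr]
  rfl

lemma cbound (hG : G.Preconnected) :
    ∀ (r : ℕ) (A : Finset (Fin k)) (ψ : Fin k → Fin n), A.Nonempty → Aᶜ.card = r →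
      ((Ext G χ A ψ).card : ℝ) ≤ (((Mst G χ A ψ).card : ℝ) / r) ^ r := by
  intro r
  induction r with
  | zero =>
    intro A ψ _ h
    have hA := compl_zero_eq_univ h
    subst hA
    rw [pow_zero]
    exact_mod_cast Ext_card_le_one
  | succ r ih =>
    intro A ψ hA hr
    have hAne : A ≠ univ := by
      intro e; subst e; simp at hr
    obtain ⟨a, ha, b, hb, hadj⟩ := cross_edge hG hA hAne
    set S := (Ext G χ A ψ).image (fun φ => φ b) with hSdef
    set m := (Mst G χ A ψ).card with hmdef
    have hSM : S ⊆ Mst G χ A ψ := image_subset_Mst hb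
    have hsm : S.card ≤ m := Finset.card_le_card hSM
    have hsmR : (S.card : ℝ) ≤ (m : ℝ) := by exact_mod_cast hsm
    have hMw : ∀ w, ((Mst G χ (insert b A) (Function.update ψ b w)).card : ℝ) ≤
        (m : ℝ) - S.card := by
      intro w
      have h1 : (Mst G χ (insert b A) (Function.update ψ b w)).card ≤
          (Mst G χ A ψ \ ((Ext G χ A ψ).image (fun φ => φ b))).card :=
        Finset.card_le_card (Mst_insert_subset ha hb hadj w)
      rw [← hSdef, Finset.card_sdiff_of_subset hSM, ← hmdef] at h1
      calc ((Mst G χ (insert b A) (Function.update ψ b w)).card : ℝ)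
          ≤ ((m - S.card : ℕ) : ℝ) := by exact_mod_cast h1
        _ = (m : ℝ) - S.card := by rw [Nat.cast_sub hsm]
    rw [card_fiber hb]
    push_cast
    rw [← hSdef]
    have hterm : ∀ w ∈ S, ((Ext G χ (insert b A) (Function.update ψ b w)).card : ℝ) ≤
        (((m : ℝ) - S.card) / r) ^ r := by
      intro w _
      calc ((Ext G χ (insert b A) (Function.update ψ b w)).card : ℝ)
          ≤ (((Mst G χ (insert b A) (Function.update ψ b w)).card : ℝ) / r) ^ r :=
            ih (insert b A) (Function.update ψ b w) (Finset.insert_nonempty b A)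
              (compl_insert_card hb hr)
        _ ≤ (((m : ℝ) - S.card) / r) ^ r :=
            pow_le_pow_left₀ (by positivity)
              (div_mono_nonneg (hMw w) (Nat.cast_nonneg r)) r
    have step1 : ∑ w ∈ S, ((Ext G χ (insert b A) (Function.update ψ b w)).card : ℝ) ≤
        S.card * (((m : ℝ) - S.card) / r) ^ r := by
      rw [← nsmul_eq_mul, ← Finset.sum_const]
      exact Finset.sum_le_sum hterm
    have step2 : (S.card : ℝ) * (((m : ℝ) - S.card) / r) ^ r ≤
        (((S.card : ℝ) + ((m : ℝ) - S.card)) / (r + 1)) ^ (r + 1) :=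
      amgm_aux (Nat.cast_nonneg _) (by linarith) r
    have step3 : (((S.card : ℝ) + ((m : ℝ) - S.card)) / (r + 1)) ^ (r + 1) =
        ((m : ℝ) / ((r : ℝ) + 1)) ^ (r + 1) := by
      ring_nf
    exact le_trans (le_trans step1 step2) (le_of_eq step3)


lemma Tst_y_mem {y : Fin n} {A : Finset (Fin k)} {ψ : Fin k → Fin n}
    (h : (Tst G χ y A ψ).card ≠ 0) : y ∈ Mst G χ A ψ := by
  obtain ⟨φ, hφ⟩ := Finset.card_ne_zero.1 h  -- nonempty
  rcases Finset.mem_filter.1 hφ with ⟨hE, c, hc, hcy⟩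
  exact mem_Mst.2 ⟨φ, hE, c, hc, hcy⟩

lemma Tst_card_fiber {y : Fin n} {A : Finset (Fin k)} {ψ : Fin k → Fin n} {b : Fin k}
    (hb : b ∉ A) :
    (Tst G χ y A ψ).card =
      ∑ w ∈ (Ext G χ A ψ).image (fun φ => φ b),
        (if w = y then (Ext G χ (insert b A) (Function.update ψ b y)).card
         else (Tst G χ y (insert b A) (Function.update ψ b w)).card) := by
  have H : ∀ φ ∈ Tst G χ y A ψ, φ b ∈ (Ext G χ A ψ).image (fun φ => φ b) := by
    intro φ hφ
    exact Finset.mem_image_of_mem _ (Finset.filter_subset _ _ hφ)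
  rw [Finset.card_eq_sum_card_fiberwise H]
  refine Finset.sum_congr rfl (fun w hw => ?_)
  have hsplit : (Tst G χ y A ψ).filter (fun φ => φ b = w) =
      (Ext G χ (insert b A) (Function.update ψ b w)).filter
        (fun φ => ∃ c, c ∉ A ∧ φ c = y) := by
    rw [Tst, Finset.filter_filter, ← ext_filter_eq hb w, Finset.filter_filter]
    exact Finset.filter_congr (fun φ _ => by tauto)
  rw [hsplit]
  by_cases hwy : w = y
  · subst hwy
    rw [if_pos rfl]
    congr 1
    refine Finset.filter_true_of_mem ?_
    intro φ hφ
    refine ⟨b, hb, ?_⟩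
    have := (mem_Ext.1 hφ).2.2 b (mem_insert_self b A)
    rwa [Function.update_self] at this
  · rw [if_neg hwy]
    congr 1
    rw [Tst]
    refine Finset.filter_congr (fun φ hφ => ?_)
    have hφb : φ b = w := by
      have := (mem_Ext.1 hφ).2.2 b (mem_insert_self b A)
      rwa [Function.update_self] at this
    constructor
    · rintro ⟨c, hc, hcy⟩
      have hcb : c ≠ b := by
        rintro rfl
        exact hwy (hφb ▸ hcy.symm ▸ rfl)
      exact ⟨c, fun hmem => (Finset.mem_insert.1 hmem).elim hcb hc, hcy⟩
    · rintro ⟨c, hc, hcy⟩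
      exact ⟨c, fun hmem => hc (mem_insert_of_mem hmem), hcy⟩

lemma tbound (hG : G.Preconnected) (y : Fin n) :
    ∀ (r : ℕ) (A : Finset (Fin k)) (ψ : Fin k → Fin n), A.Nonempty → Aᶜ.card = r →
      (Tst G χ y A ψ).card ≠ 0 →
      ((Tst G χ y A ψ).card : ℝ) ≤
        ((((Mst G χ A ψ).card : ℝ) - 1) / ((r : ℝ) - 1)) ^ (r - 1) := by
  intro r
  induction r with
  | zero =>
    intro A ψ _ h hT
    exfalso
    apply hT
    have hA := compl_zero_eq_univ h
    subst hA
    rw [Tst_univ_eq_empty]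
    exact Finset.card_empty
  | succ r ih =>
    intro A ψ hA hr hT
    have hAne : A ≠ univ := by intro e; subst e; simp at hr
    obtain ⟨a, ha, b, hb, hadj⟩ := cross_edge hG hA hAne
    set S := (Ext G χ A ψ).image (fun φ => φ b) with hSdef
    set m := (Mst G χ A ψ).card with hmdef
    have hSM : S ⊆ Mst G χ A ψ := image_subset_Mst hb
    have hsm : S.card ≤ m := Finset.card_le_card hSM
    have hsmR : (S.card : ℝ) ≤ (m : ℝ) := by exact_mod_cast hsm
    have hMw : ∀ w, ((Mst G χ (insert b A) (Function.update ψ b w)).card : ℝ) ≤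
        (m : ℝ) - S.card := by
      intro w
      have h1 : (Mst G χ (insert b A) (Function.update ψ b w)).card ≤
          (Mst G χ A ψ \ ((Ext G χ A ψ).image (fun φ => φ b))).card :=
        Finset.card_le_card (Mst_insert_subset ha hb hadj w)
      rw [← hSdef, Finset.card_sdiff_of_subset hSM, ← hmdef] at h1
      calc ((Mst G χ (insert b A) (Function.update ψ b w)).card : ℝ)
          ≤ ((m - S.card : ℕ) : ℝ) := by exact_mod_cast h1
        _ = (m : ℝ) - S.card := by rw [Nat.cast_sub hsm]
    simp only [Nat.add_sub_cancel, Nat.cast_add, Nat.cast_one, add_sub_cancel_right]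
    by_cases hyS : y ∈ S
    · -- the y-branch is the only nonzero fiber
      have hzero : ∀ w ∈ S, w ≠ y →
          (Tst G χ y (insert b A) (Function.update ψ b w)).card = 0 := by
        intro w hw hwy
        by_contra h0
        have hyM := Tst_y_mem h0
        have hmem := Mst_insert_subset ha hb hadj w hyM
        rw [Finset.mem_sdiff] at hmem
        exact hmem.2 (hSdef ▸ hyS)
      have hsum : (Tst G χ y A ψ).card =
          (Ext G χ (insert b A) (Function.update ψ b y)).card := by
        rw [Tst_card_fiber hb, ← hSdef]
        rw [Finset.sum_eq_single_of_mem y hyS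
          (fun w hw hwy => by rw [if_neg hwy]; exact hzero w hw hwy)]
        rw [if_pos rfl]
      rw [hsum]
      have hcb := cbound (χ := χ) hG r (insert b A) (Function.update ψ b y)
        (Finset.insert_nonempty b A) (compl_insert_card hb hr)
      have hS1 : (1 : ℝ) ≤ S.card := by
        have : 0 < S.card := Finset.card_pos.2 ⟨y, hyS⟩
        exact_mod_cast this
      refine le_trans hcb (pow_le_pow_left₀ (by positivity) ?_ r)
      refine div_mono_nonneg ?_ (Nat.cast_nonneg r)
      have := hMw y
      linarith
    · -- all fibers are Tst-fibers
      have hsumN : (Tst G χ y A ψ).card =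
          ∑ w ∈ S, (Tst G χ y (insert b A) (Function.update ψ b w)).card := by
        rw [Tst_card_fiber hb, ← hSdef]
        exact Finset.sum_congr rfl (fun w hw => if_neg (fun e : w = y => hyS (e ▸ hw)))
      have hex : ∃ w ∈ S, (Tst G χ y (insert b A) (Function.update ψ b w)).card ≠ 0 := by
        by_contra hno
        push_neg at hno
        exact hT (hsumN.trans (Finset.sum_eq_zero hno))
      obtain ⟨w0, hw0, h0⟩ := hex
      rcases Nat.eq_zero_or_pos r with hr0 | hr0
      · exfalso
        subst hr0
        have huniv : insert b A = univ := compl_zero_eq_univ (compl_insert_card hb hr)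
        apply h0
        rw [huniv, Tst_univ_eq_empty]
        exact Finset.card_empty
      have hrR : (1 : ℝ) ≤ (r : ℝ) := by exact_mod_cast hr0
      have h1M : (1 : ℝ) ≤ ((Mst G χ (insert b A) (Function.update ψ b w0)).card : ℝ) := by
        have : 0 < (Mst G χ (insert b A) (Function.update ψ b w0)).card :=
          Finset.card_pos.2 ⟨y, Tst_y_mem h0⟩
        exact_mod_cast this
      have hms1 : (0 : ℝ) ≤ (m : ℝ) - S.card - 1 := by
        have := hMw w0; linarith
      have hterm : ∀ w ∈ S,
          ((Tst G χ y (insert b A) (Function.update ψ b w)).card : ℝ) ≤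
            (((m : ℝ) - S.card - 1) / ((r : ℝ) - 1)) ^ (r - 1) := by
        intro w hw
        by_cases h0' : (Tst G χ y (insert b A) (Function.update ψ b w)).card = 0
        · rw [h0']
          push_cast
          exact pow_nonneg (div_nonneg hms1 (by linarith)) _
        · have hle := ih (insert b A) (Function.update ψ b w)
            (Finset.insert_nonempty b A) (compl_insert_card hb hr) h0'
          refine le_trans hle (pow_le_pow_left₀ ?_ ?_ _)
          · have h1Mw : (1 : ℝ) ≤
                ((Mst G χ (insert b A) (Function.update ψ b w)).card : ℝ) := by
              have : 0 < (Mst G χ (insert b A) (Function.update ψ b w)).card :=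
                Finset.card_pos.2 ⟨y, Tst_y_mem h0'⟩
              exact_mod_cast this
            exact div_nonneg (by linarith) (by linarith)
          · refine div_mono_nonneg ?_ (by linarith)
            have := hMw w; linarith
      have hS1 : (1 : ℝ) ≤ S.card := by
        have : 0 < S.card := Finset.card_pos.2 ⟨w0, hw0⟩
        exact_mod_cast this
      have step1 : ((Tst G χ y A ψ).card : ℝ) ≤
          S.card * (((m : ℝ) - S.card - 1) / ((r : ℝ) - 1)) ^ (r - 1) := by
        rw [hsumN]
        push_cast
        rw [← nsmul_eq_mul, ← Finset.sum_const]
        exact Finset.sum_le_sum hterm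
      have hq : ((r - 1 : ℕ) : ℝ) = (r : ℝ) - 1 := by
        rw [Nat.cast_sub hr0]; norm_num
      have step2 : (S.card : ℝ) *
          (((m : ℝ) - S.card - 1) / ((r - 1 : ℕ) : ℝ)) ^ (r - 1) ≤
          (((S.card : ℝ) + ((m : ℝ) - S.card - 1)) / (((r - 1 : ℕ) : ℝ) + 1)) ^ ((r - 1) + 1) :=
        amgm_aux (Nat.cast_nonneg _) hms1 (r - 1)
      rw [hq] at step2
      have hq2 : ((r : ℝ) - 1) + 1 = (r : ℝ) := by ring
      rw [hq2] at step2
      have hq3 : (r - 1) + 1 = r := Nat.succ_pred_eq_of_pos hr0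
      rw [hq3] at step2
      have hq4 : (S.card : ℝ) + ((m : ℝ) - S.card - 1) = (m : ℝ) - 1 := by ring
      rw [hq4] at step2
      exact le_trans step1 step2


theorem final_bound {k n : ℕ} (hk : 3 ≤ k)
    {G : SimpleGraph (Fin k)} (hG : G.Connected)
    {χ : Fin n → Fin n → Finset (Fin k)}
    (i : Fin k) (x y : Fin n) (hxy : x ≠ y) :
    ((((Finset.univ : Finset (Fin k → Fin n)).filter
        (fun φ => Function.Injective φ ∧ φ i = x ∧
          (∀ a b : Fin k, a ≠ b → χ (φ a) (φ b) = rainbowOf G a b) ∧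
          ∃ a, φ a = y)).card : ℝ)) ≤
      (((Nset k n (rainbowOf G) χ i x).card : ℝ) / ((k : ℝ) - 2)) ^ (k - 2) := by
  classical
  have hk3R : (3 : ℝ) ≤ (k : ℝ) := by exact_mod_cast hk
  have hk2R : (0 : ℝ) ≤ (k : ℝ) - 2 := by linarith
  set ψ0 : Fin k → Fin n := fun _ => x with hψ0
  have hset : ((Finset.univ : Finset (Fin k → Fin n)).filter
      (fun φ => Function.Injective φ ∧ φ i = x ∧
        (∀ a b : Fin k, a ≠ b → χ (φ a) (φ b) = rainbowOf G a b) ∧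
        ∃ a, φ a = y)) = Tst G χ y {i} ψ0 := by
    ext φ
    simp only [Finset.mem_filter, Finset.mem_univ, true_and, Tst, mem_Ext]
    constructor
    · rintro ⟨hinj, hix, hcol, a, hay⟩
      refine ⟨⟨hinj, hcol, fun a' ha' => ?_⟩, a, ?_, hay⟩
      · rw [Finset.mem_singleton] at ha'
        subst ha'; exact hix
      · rw [Finset.mem_singleton]
        rintro rfl
        exact hxy (hix ▸ hay ▸ rfl)
    · rintro ⟨⟨hinj, hcol, hanch⟩, c, _, hcy⟩
      exact ⟨hinj, hanch i (Finset.mem_singleton_self i), hcol, c, hcy⟩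
  have hNset : Mst G χ {i} ψ0 = Nset k n (rainbowOf G) χ i x := by
    ext z
    simp only [mem_Mst, Nset, Finset.mem_filter, Finset.mem_univ, true_and]
    constructor
    · rintro ⟨φ, hφ, bb, hbb, rfl⟩
      rcases mem_Ext.1 hφ with ⟨hinj, hcol, hanch⟩
      have hφi : φ i = x := hanch i (Finset.mem_singleton_self i)
      rw [Finset.mem_singleton] at hbb
      refine ⟨fun h => hbb (hinj (h.trans hφi.symm)), φ, hinj, hφi, hcol, bb, rfl⟩
    · rintro ⟨hzx, φ, hinj, hφi, hcol, a, haz⟩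
      have hai : a ≠ i := by
        rintro rfl
        exact hzx (haz.symm.trans hφi)
      refine ⟨φ, mem_Ext.2 ⟨hinj, hcol, fun a' ha' => ?_⟩, a, ?_, haz⟩
      · rw [Finset.mem_singleton] at ha'; subst ha'; exact hφi
      · rw [Finset.mem_singleton]; exact hai
  rw [hset, ← hNset]
  by_cases hT : (Tst G χ y {i} ψ0).card = 0
  · rw [hT]
    norm_num
    exact pow_nonneg (div_nonneg (Nat.cast_nonneg _) hk2R) _
  · have hr : (({i} : Finset (Fin k))ᶜ).card = k - 1 := by
      rw [Finset.card_compl, Finset.card_singleton, Fintype.card_fin]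
    have hb := tbound (χ := χ) hG.preconnected y (k - 1) {i} ψ0
      (Finset.singleton_nonempty i) hr hT
    have he1 : k - 1 - 1 = k - 2 := by omega
    have he2 : ((k - 1 : ℕ) : ℝ) - 1 = (k : ℝ) - 2 := by
      rw [Nat.cast_sub (by omega : 1 ≤ k)]; ring
    rw [he1, he2] at hb
    have hm1 : (1 : ℝ) ≤ ((Mst G χ {i} ψ0).card : ℝ) := by
      have : 0 < (Mst G χ {i} ψ0).card := Finset.card_pos.2 ⟨y, Tst_y_mem hT⟩
      exact_mod_cast this
    refine le_trans hb (pow_le_pow_left₀ ?_ ?_ _)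
    · exact div_nonneg (by linarith) hk2R
    · exact div_mono_nonneg (by linarith) hk2R

end PBPaux


/-- Lemma partition, last statement: for a connected rainbow graph `R` on `[k]`
and distinct vertices `x ≠ y` of `H`, the number of color-preserving injections `φ` with
`φ i = x` and `y` in the image of `φ` is at most `(|N_i(x)|/(k−2))^{k−2}`. -/
theorem partition_bound_through_pair (k n : ℕ) (hk : 3 ≤ k)
    (G : SimpleGraph (Fin k)) (hG : G.Connected)
    (χ : Fin n → Fin n → Finset (Fin k)) (hχ : IsSym χ)
    (i : Fin k) (x y : Fin n) (hxy : x ≠ y) :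
    ((((Finset.univ : Finset (Fin k → Fin n)).filter
        (fun φ => Function.Injective φ ∧ φ i = x ∧
          (∀ a b : Fin k, a ≠ b → χ (φ a) (φ b) = rainbowOf G a b) ∧
          ∃ a, φ a = y)).card : ℝ)) ≤
      (((Nset k n (rainbowOf G) χ i x).card : ℝ) / ((k : ℝ) - 2)) ^ (k - 2) := by
  exact PBPaux.final_bound hk hG i x y hxy
end

section
/- Let R be a rainbow graph on vertex set [k] with edge set E, viewed as a T-edge-colored complete graph with T = E ∪ {∅}, and let H be an n-vertex T-edge-colored complete graph with coloring χ_H. Then for every x ∈ V(H) and all distinct i, j ∈ [k], |N_i(x)| + |N_j(x)| ≤ n + d_{{i,j}}(x) + d_∅(x), where d_{{i,j}}(x) is the number of vertices y ≠ x with χ_H(xy) = {i,j} (this count is 0 if {i,j} ∉ E) and d_∅(x) is the number of vertices y ≠ x with χ_H(xy) = ∅. -/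
open Finset Filter

open scoped Classical

/-! A vertex `y` of `N_i(x)` sits at some position `a ≠ i` of a copy of `R` with `x` at
position `i`, so `χ x y = R i a`; for a rainbow graph that colour is `∅` or `{i, a}`.
A common vertex of `N_i(x)` and `N_j(x)` therefore sees `x` in colour `∅` or `{i, j}`, and
inclusion–exclusion bounds `|N_i(x)| + |N_j(x)|` by `|N_i(x) ∪ N_j(x)| ≤ n` plus these two
colour degrees. -/

section Nset

variable {T : Type} {k n : ℕ} {R : Fin k → Fin k → T} {χ : Fin n → Fin n → T}
  {i : Fin k} {x y : Fin n}

lemma ne_of_mem_Nset (hy : y ∈ Nset k n R χ i x) : y ≠ x :=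
  (mem_filter.mp hy).2.1

lemma exists_color_eq_of_mem_Nset (hy : y ∈ Nset k n R χ i x) : ∃ a, χ x y = R i a := by
  obtain ⟨-, hyx, φ, -, rfl, hcol, a, rfl⟩ := mem_filter.mp hy
  exact ⟨a, hcol i a fun h => hyx (congrArg φ h.symm)⟩

end Nset

lemma rainbowOf_eq_empty_or {k : ℕ} (G : SimpleGraph (Fin k)) (i a : Fin k) :
    rainbowOf G i a = ∅ ∨ rainbowOf G i a = {i, a} := by
  unfold rainbowOf
  split_ifs <;> simp

lemma color_eq_of_mem_Nset_inter {k n : ℕ} {G : SimpleGraph (Fin k)}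
    {χ : Fin n → Fin n → Finset (Fin k)} {x y : Fin n} {i j : Fin k} (hij : i ≠ j)
    (hy : y ∈ Nset k n (rainbowOf G) χ i x ∩ Nset k n (rainbowOf G) χ j x) :
    χ x y = {i, j} ∨ χ x y = ∅ := by
  obtain ⟨hyi, hyj⟩ := mem_inter.mp hy
  obtain ⟨a, hia⟩ := exists_color_eq_of_mem_Nset hyi
  obtain ⟨b, hjb⟩ := exists_color_eq_of_mem_Nset hyj
  rcases rainbowOf_eq_empty_or G i a with ha | ha
  · exact .inr (hia.trans ha)
  rcases rainbowOf_eq_empty_or G j b with hb | hb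
  · exact .inr (hjb.trans hb)
  have hj : j ∈ ({i, a} : Finset (Fin k)) := by
    rw [← ha, ← hia, hjb, hb]
    exact mem_insert_self j {b}
  obtain rfl : j = a := by simpa [Ne.symm hij] using hj
  exact .inl (hia.trans ha)

lemma card_Nset_inter_le {k n : ℕ} (G : SimpleGraph (Fin k))
    (χ : Fin n → Fin n → Finset (Fin k)) (x : Fin n) {i j : Fin k} (hij : i ≠ j) :
    (Nset k n (rainbowOf G) χ i x ∩ Nset k n (rainbowOf G) χ j x).card ≤
      colorDeg χ x ({i, j} : Finset (Fin k)) + colorDeg χ x (∅ : Finset (Fin k)) := by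
  refine (card_le_card fun y hy => ?_).trans (card_union_le _ _)
  have hyx := ne_of_mem_Nset (mem_inter.mp hy).1
  simp only [mem_union, mem_filter, mem_univ, true_and]
  exact (color_eq_of_mem_Nset_inter hij hy).imp (⟨hyx, ·⟩) (⟨hyx, ·⟩)

theorem neighborhoods_overlap_general (k n : ℕ) (G : SimpleGraph (Fin k))
    (χ : Fin n → Fin n → Finset (Fin k))
    (x : Fin n) (i j : Fin k) (hij : i ≠ j) :
    (Nset k n (rainbowOf G) χ i x).card + (Nset k n (rainbowOf G) χ j x).card ≤
      n + colorDeg χ x ({i, j} : Finset (Fin k)) + colorDeg χ x (∅ : Finset (Fin k)) := by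
  have hunion : (Nset k n (rainbowOf G) χ i x ∪ Nset k n (rainbowOf G) χ j x).card ≤ n := by
    simpa using card_le_univ (Nset k n (rainbowOf G) χ i x ∪ Nset k n (rainbowOf G) χ j x)
  have hinter := card_Nset_inter_le G χ x hij
  rw [← card_union_add_card_inter]
  omega

/-- for a rainbow graph `R` on `[k]` and any `x` and distinct `i, j`,
`|N_i(x)| + |N_j(x)| ≤ n + d_{{i,j}}(x) + d_∅(x)`. -/
theorem neighborhoods_overlap (k n : ℕ) (G : SimpleGraph (Fin k))
    (χ : Fin n → Fin n → Finset (Fin k)) (hχ : IsSym χ)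
    (x : Fin n) (i j : Fin k) (hij : i ≠ j) :
    (Nset k n (rainbowOf G) χ i x).card + (Nset k n (rainbowOf G) χ j x).card ≤
      n + colorDeg χ x ({i, j} : Finset (Fin k)) + colorDeg χ x (∅ : Finset (Fin k)) :=
  neighborhoods_overlap_general k n G χ x i j hij
end
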